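/- arXiv:1510.05636 — 5 statements merged into one kernel-verified Lean document; each statement's English description precedes it below -/
import Mathlib

section
/- In a Coxeter group W with simple reflections indexed by S, an element w is the longest element of a finite standard parabolic subgroup W_J if and only if the join (least upper bound in right weak order) of the set of simple reflections {s_j : j ∈ J} exists and equals w; moreover if W_J is infinite, the set {s_j : j ∈ J} has no upper bound in weak order. -/
/-- The right weak Bruhat order on a Coxeter group: `u ≤ v` iff `ℓ(u) + ℓ(u⁻¹v) = ℓ(v)`. -/
noncomputable def rweakLE {B W : Type*} [Group W] {M : CoxeterMatrix B}
    (cs : CoxeterSystem M W) (u v : W) : Prop :=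
  cs.length u + cs.length (u⁻¹ * v) = cs.length v

/-- The standard parabolic subgroup `W_J` generated by the simple reflections in `J`. -/
def parabolic {B W : Type*} [Group W] {M : CoxeterMatrix B}
    (cs : CoxeterSystem M W) (J : Set B) : Subgroup W :=
  Subgroup.closure (cs.simple '' J)

/-!
The engine is the exchange property, obtained from Tits' permutation representation of `W` on
`W × ZMod 2`: the parity of the number of occurrences of `t` in the left inversion sequence of a
word depends only on the product of the word. Hence a left descent `s i` of `π ω` occurs in that
sequence, and deleting the corresponding letter of `ω` gives a word for `s i * π ω`. This yields
the lifting property of the weak order (`u ≤ w` with `s` a left descent of `w` but not of `u`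
implies `s * u ≤ w`) and the finiteness of the lower intervals `[1, w]`.

An upper bound `w` of `{s_j : j ∈ J}` is an element having every `j ∈ J` as a left descent. A
longest element `u` of `W_J ∩ [1, w]` again has every `j ∈ J` as a left descent, and lifting, by
induction on length, puts all of `W_J` below `u`. So `W_J ⊆ [1, u]` is finite, `u` is its longest
element, and `u` lies below every upper bound: it is the join.
-/

namespace CoxeterSystem

variable {B W : Type*} [Group W] {M : CoxeterMatrix B} (cs : CoxeterSystem M W)

local prefix:100 "s" => cs.simple
local prefix:100 "π" => cs.wordProd
local prefix:100 "ℓ" => cs.length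
local prefix:100 "ris" => cs.rightInvSeq
local prefix:100 "lis" => cs.leftInvSeq

open scoped Classical

theorem simple_mul_mul_simple_eq_simple_iff (i : B) (t : W) : s i * t * s i = s i ↔ t = s i := by
  constructor
  · intro h
    simpa [mul_assoc] using congrArg (s i * · * s i) h
  · rintro rfl
    simp

/-- Tits' permutation representation, with the reflections `T` enlarged to all of `W`:
`s i` acts on `W × ZMod 2` by `(t, ε) ↦ (s i * t * s i, ε + [t = s i])`. -/
noncomputable def simplePerm (i : B) : Equiv.Perm (W × ZMod 2) :=
  Function.Involutive.toPerm (fun p => (s i * p.1 * s i, p.2 + if p.1 = s i then 1 else 0)) <| by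
    rintro ⟨t, ε⟩
    ext
    · simp [mul_assoc]
    · by_cases ht : t = s i
      · simp [ht, add_assoc]
        decide
      · simp [ht, cs.simple_mul_mul_simple_eq_simple_iff]

theorem simplePerm_apply (i : B) (p : W × ZMod 2) :
    cs.simplePerm i p = (s i * p.1 * s i, p.2 + if p.1 = s i then 1 else 0) := rfl

theorem prod_map_simplePerm_apply (ω : List B) (t : W) (ε : ZMod 2) :
    (ω.map cs.simplePerm).prod (t, ε) = (π ω * t * (π ω)⁻¹, ε + (ris ω).count t) := by
  induction ω with
  | nil => simp
  | cons i ω ih =>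
    have hhead : (π ω)⁻¹ * s i * π ω = t ↔ π ω * t * (π ω)⁻¹ = s i := by
      constructor <;> intro h <;> rw [← h] <;> group
    simp only [List.map_cons, List.prod_cons, Equiv.Perm.mul_apply, ih, simplePerm_apply,
      rightInvSeq, List.count_cons, beq_iff_eq, hhead, wordProd_cons, mul_inv_rev, inv_simple]
    ext
    · simp [mul_assoc]
    · split_ifs <;> simp [add_assoc]

theorem prod_map_alternatingWord {G : Type*} [Monoid G] (f : B → G) (i j : B) (m : ℕ) :
    ((alternatingWord i j (2 * m)).map f).prod = (f i * f j) ^ m := by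
  induction m with
  | zero => simp [alternatingWord]
  | succ m ih =>
    rw [Nat.mul_succ, alternatingWord_succ', alternatingWord_succ']
    simp [ih, pow_succ', mul_assoc]

theorem reverse_alternatingWord (i j : B) (m : ℕ) :
    (alternatingWord j i (2 * m)).reverse = alternatingWord i j (2 * m) := by
  induction m with
  | zero => simp [alternatingWord]
  | succ m ih =>
    rw [Nat.mul_succ, alternatingWord_succ, alternatingWord_succ, alternatingWord_succ',
      alternatingWord_succ']
    simp [ih]

theorem leftInvSeq_alternatingWord (i j : B) :
    lis (alternatingWord j i (2 * M i j)) =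
      (List.range (M i j)).map (fun k => s j * (s i * s j) ^ k) ++
        (List.range (M i j)).map (fun k => s j * (s i * s j) ^ k) := by
  apply List.ext_getElem (by simp [two_mul])
  intro k hk _
  rw [cs.getElem_leftInvSeq_alternatingWord j i (M i j) k (by simpa using hk),
    prod_alternatingWord_eq_mul_pow, if_neg (Nat.not_even_two_mul_add_one k),
    show (2 * k + 1) / 2 = k by omega, List.getElem_append]
  simp only [List.length_map, List.length_range, List.getElem_map, List.getElem_range]
  split_ifs with hkM
  · rfl
  · conv_lhs => rw [show k = M i j + (k - M i j) by omega, pow_add, simple_mul_simple_pow, one_mul]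

theorem isLiftable_simplePerm : M.IsLiftable cs.simplePerm := by
  intro i j
  ext ⟨t, ε⟩ : 1
  have hprod : π (alternatingWord i j (2 * M i j)) = 1 := by
    rw [wordProd, prod_map_alternatingWord, simple_mul_simple_pow]
  have hcount : ((ris (alternatingWord i j (2 * M i j))).count t : ZMod 2) = 0 := by
    rw [← reverse_alternatingWord, rightInvSeq_reverse, List.count_reverse,
      leftInvSeq_alternatingWord, List.count_append, ZMod.natCast_eq_zero_iff_even]
    exact Even.add_self _
  rw [← prod_map_alternatingWord, prod_map_simplePerm_apply, hprod, hcount]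
  simp

noncomputable def titsRep : W →* Equiv.Perm (W × ZMod 2) :=
  cs.lift ⟨cs.simplePerm, cs.isLiftable_simplePerm⟩

theorem titsRep_wordProd (ω : List B) : cs.titsRep (π ω) = (ω.map cs.simplePerm).prod := by
  rw [wordProd, map_list_prod, List.map_map]
  congr 1
  exact List.map_congr_left fun i _ => cs.lift_apply_simple cs.isLiftable_simplePerm i

theorem natCast_count_rightInvSeq_eq {ω ω' : List B} (h : π ω = π ω') (t : W) :
    ((ris ω).count t : ZMod 2) = (ris ω').count t := by
  have := congrArg (fun g => (g (t, 0)).2) (congrArg cs.titsRep h)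
  simpa [titsRep_wordProd, prod_map_simplePerm_apply] using this

theorem natCast_count_leftInvSeq_eq {ω ω' : List B} (h : π ω = π ω') (t : W) :
    ((lis ω).count t : ZMod 2) = (lis ω').count t := by
  rw [← List.count_reverse, ← rightInvSeq_reverse, ← List.count_reverse (l := lis ω'),
    ← rightInvSeq_reverse]
  exact cs.natCast_count_rightInvSeq_eq (by simp [h]) t

theorem simple_mem_leftInvSeq {ω : List B} {i : B} (hi : cs.IsLeftDescent (π ω) i) :
    s i ∈ lis ω := by
  obtain ⟨ρ, hρ, hρω⟩ := cs.exists_isReduced (s i * π ω)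
  have hπ : π (i :: ρ) = π ω := by rw [wordProd_cons, ← hρω, simple_mul_simple_cancel_left]
  have hred : cs.IsReduced (i :: ρ) := by
    have := cs.isLeftDescent_iff.mp hi
    rw [IsReduced, hπ, List.length_cons, ← hρ.eq, ← hρω, this]
  have hone : (lis (i :: ρ)).count (s i) = 1 :=
    List.count_eq_one_of_mem hred.nodup_leftInvSeq (by simp [leftInvSeq])
  have hodd := cs.natCast_count_leftInvSeq_eq hπ (s i)
  rw [hone, Nat.cast_one] at hodd
  rw [← List.count_pos_iff, Nat.pos_iff_ne_zero]
  rintro h0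
  simp [h0] at hodd

/-- The exchange property, phrased with sublists. -/
theorem exists_sublist_of_isLeftDescent {ω : List B} {i : B} (hi : cs.IsLeftDescent (π ω) i) :
    ∃ ω' : List B, ω'.Sublist ω ∧ ω'.length + 1 = ω.length ∧ π ω' = s i * π ω := by
  obtain ⟨k, hk, hki⟩ := List.mem_iff_getElem.mp (cs.simple_mem_leftInvSeq hi)
  rw [length_leftInvSeq] at hk
  refine ⟨ω.eraseIdx k, ω.eraseIdx_sublist k, List.length_eraseIdx_add_one hk, ?_⟩
  rw [← getD_leftInvSeq_mul_wordProd, List.getD_eq_getElem _ _ (by simpa using hk), hki]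

theorem exists_sublist_of_isRightDescent {ω : List B} {i : B} (hi : cs.IsRightDescent (π ω) i) :
    ∃ ω' : List B, ω'.Sublist ω ∧ π ω' = π ω * s i := by
  rw [← isLeftDescent_inv_iff, ← wordProd_reverse] at hi
  obtain ⟨ω', hω', -, hπ⟩ := cs.exists_sublist_of_isLeftDescent hi
  refine ⟨ω'.reverse, List.reverse_sublist.mp (by simpa using hω'), ?_⟩
  rw [wordProd_reverse, hπ, wordProd_reverse, mul_inv_rev, inv_inv, inv_simple]

theorem exists_isReduced_sublist (ω : List B) :
    ∃ ω' : List B, ω'.Sublist ω ∧ cs.IsReduced ω' ∧ π ω' = π ω := by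
  induction ω with
  | nil => exact ⟨[], List.Sublist.slnil, by simp [IsReduced], rfl⟩
  | cons i ω ih =>
    obtain ⟨ρ, hρω, hρ, hπ⟩ := ih
    by_cases hi : cs.IsLeftDescent (π ρ) i
    · obtain ⟨ρ', hρ'ρ, hlen, hπ'⟩ := cs.exists_sublist_of_isLeftDescent hi
      refine ⟨ρ', (hρ'ρ.trans hρω).cons i, ?_, by rw [hπ', hπ, wordProd_cons]⟩
      have := cs.isLeftDescent_iff.mp hi
      rw [IsReduced, hπ']
      rw [hρ.eq] at this
      omega
    · refine ⟨i :: ρ, hρω.cons_cons i, ?_, by rw [wordProd_cons, wordProd_cons, hπ]⟩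
      rw [IsReduced, wordProd_cons, cs.not_isLeftDescent_iff.mp hi, hρ.eq, List.length_cons]

theorem rweakLE_one (w : W) : rweakLE cs 1 w := by simp [rweakLE]

theorem length_le_of_rweakLE {u w : W} (h : rweakLE cs u w) : ℓ u ≤ ℓ w :=
  h ▸ Nat.le_add_right _ _

theorem eq_of_rweakLE_of_length_le {u w : W} (h : rweakLE cs u w) (hl : ℓ w ≤ ℓ u) : u = w := by
  have : ℓ (u⁻¹ * w) = 0 := by unfold rweakLE at h; omega
  exact inv_mul_eq_one.mp (cs.length_eq_zero_iff.mp this)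

theorem rweakLE_simple_iff {j : B} {w : W} : rweakLE cs (s j) w ↔ cs.IsLeftDescent w j := by
  rw [rweakLE, length_simple, inv_simple, isLeftDescent_iff, add_comm]

/-- The lifting property of the weak order. -/
theorem rweakLE_simple_mul {u w : W} {i : B} (h : rweakLE cs u w) (hw : cs.IsLeftDescent w i)
    (hu : ¬ cs.IsLeftDescent u i) : rweakLE cs (s i * u) w := by
  obtain ⟨ω₁, h₁, rfl⟩ := cs.exists_isReduced u
  obtain ⟨ω₂, h₂, hx⟩ := cs.exists_isReduced ((π ω₁)⁻¹ * w)
  have hlw : ℓ w = ω₁.length + ω₂.length := by rw [← h, hx, h₁.eq, h₂.eq]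
  obtain rfl : w = π (ω₁ ++ ω₂) := by rw [wordProd_append, ← hx, mul_inv_cancel_left]
  obtain ⟨_, hsub, hlen, hπ⟩ := cs.exists_sublist_of_isLeftDescent hw
  obtain ⟨a, b, rfl, ha, hb⟩ := List.sublist_append_iff.mp hsub
  have hu' := cs.not_isLeftDescent_iff.mp hu
  rw [h₁.eq] at hu'
  simp only [List.length_append] at hlen
  rw [wordProd_append, wordProd_append, ← mul_assoc] at hπ
  rcases hb.length_le.eq_or_lt with hb' | hb'
  · rw [hb.eq_of_length hb'] at hπ
    have := cs.length_wordProd_le a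
    rw [mul_right_cancel hπ] at this
    omega
  · rw [ha.eq_of_length (by have := ha.length_le; omega)] at hπ
    have hb : (s i * π ω₁)⁻¹ * π (ω₁ ++ ω₂) = π b := by
      apply mul_left_cancel (a := π ω₁)
      rw [hπ, wordProd_append, mul_inv_rev, inv_simple]
      group
    have htri := cs.length_mul_le (s i * π ω₁) ((s i * π ω₁)⁻¹ * π (ω₁ ++ ω₂))
    have := cs.length_wordProd_le b
    rw [mul_inv_cancel_left, hb] at htri
    rw [rweakLE, hb]
    omega

theorem rweakLE_mul_simple {v w : W} {i : B} (h : rweakLE cs v w)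
    (hi : cs.IsRightDescent (v⁻¹ * w) i) : cs.IsRightDescent w i ∧ rweakLE cs v (w * s i) := by
  have hi' := cs.isRightDescent_iff.mp hi
  have htri := cs.length_mul_le v (v⁻¹ * w * s i)
  have hw := cs.length_mul_simple w i
  rw [show v * (v⁻¹ * w * s i) = w * s i by group] at htri
  unfold rweakLE at h ⊢
  rw [isRightDescent_iff, show v⁻¹ * (w * s i) = v⁻¹ * w * s i from (mul_assoc ..).symm]
  omega

theorem exists_sublist_of_rweakLE {v : W} {ω : List B} (h : rweakLE cs v (π ω)) :
    ∃ ω' : List B, ω'.Sublist ω ∧ π ω' = v := by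
  induction hn : ℓ (v⁻¹ * π ω) using Nat.strong_induction_on generalizing ω with
  | _ n ih =>
    by_cases h1 : v⁻¹ * π ω = 1
    · exact ⟨ω, List.Sublist.refl ω, (inv_mul_eq_one.mp h1).symm⟩
    obtain ⟨i, hi⟩ := cs.exists_rightDescent_of_ne_one h1
    obtain ⟨hωi, hv⟩ := cs.rweakLE_mul_simple h hi
    obtain ⟨ω₁, hω₁, hπ⟩ := cs.exists_sublist_of_isRightDescent hωi
    rw [← hπ] at hv
    have hlt : ℓ (v⁻¹ * π ω₁) < n := by rw [hπ, ← mul_assoc, ← hn]; exact hi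
    obtain ⟨ω', hω', rfl⟩ := ih _ hlt hv rfl
    exact ⟨ω', hω'.trans hω₁, rfl⟩

theorem finite_setOf_rweakLE (w : W) : {v | rweakLE cs v w}.Finite := by
  obtain ⟨ω, rfl⟩ := cs.wordProd_surjective w
  refine ((List.finite_toSet ω.sublists).image cs.wordProd).subset fun v hv => ?_
  obtain ⟨ω', hω', rfl⟩ := cs.exists_sublist_of_rweakLE hv
  exact ⟨ω', List.mem_sublists.mpr hω', rfl⟩

section Parabolic

variable {J : Set B}

theorem exists_word_of_mem_parabolic {w : W} (hw : w ∈ parabolic cs J) :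
    ∃ ω : List B, (∀ i ∈ ω, i ∈ J) ∧ π ω = w := by
  induction hw using Subgroup.closure_induction with
  | mem x hx =>
    obtain ⟨j, hj, rfl⟩ := hx
    exact ⟨[j], by simpa using hj, wordProd_singleton cs j⟩
  | one => exact ⟨[], by simp, wordProd_nil cs⟩
  | mul x y _ _ hx hy =>
    obtain ⟨ωx, hωx, rfl⟩ := hx
    obtain ⟨ωy, hωy, rfl⟩ := hy
    exact ⟨ωx ++ ωy, by simpa using fun i hi => (List.mem_append.mp hi).elim (hωx i) (hωy i),
      wordProd_append cs ωx ωy⟩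
  | inv x _ hx =>
    obtain ⟨ω, hω, rfl⟩ := hx
    exact ⟨ω.reverse, by simpa using hω, wordProd_reverse cs ω⟩

theorem simple_mem_parabolic {j : B} (hj : j ∈ J) : s j ∈ parabolic cs J :=
  Subgroup.subset_closure ⟨j, hj, rfl⟩

theorem exists_isLeftDescent_of_mem_parabolic {v : W} (hv : v ∈ parabolic cs J)
    (hv1 : v ≠ 1) : ∃ j ∈ J, cs.IsLeftDescent v j := by
  obtain ⟨ω, hωJ, rfl⟩ := cs.exists_word_of_mem_parabolic hv
  obtain ⟨ρ, hρω, hρ, hπ⟩ := cs.exists_isReduced_sublist ω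
  rw [← hπ] at hv1 ⊢
  match ρ, hρω, hρ, hv1 with
  | [], _, _, hv1 => exact absurd (wordProd_nil cs) hv1
  | j :: ρ, hρω, hρ, _ =>
    refine ⟨j, hωJ j (hρω.subset List.mem_cons_self), ?_⟩
    have := cs.length_wordProd_le ρ
    rw [IsLeftDescent, wordProd_cons, simple_mul_simple_cancel_left, ← wordProd_cons, hρ.eq]
    simp only [List.length_cons]
    omega

theorem exists_rweakLE_forall_isLeftDescent {w : W} (hw : ∀ j ∈ J, cs.IsLeftDescent w j) :
    ∃ u ∈ parabolic cs J, rweakLE cs u w ∧ ∀ j ∈ J, cs.IsLeftDescent u j := by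
  obtain ⟨u, ⟨hu, huw⟩, hmax⟩ := Set.exists_max_image {u | u ∈ parabolic cs J ∧ rweakLE cs u w}
    cs.length ((cs.finite_setOf_rweakLE w).subset fun _ h => h.2) ⟨1, one_mem _, cs.rweakLE_one w⟩
  refine ⟨u, hu, huw, fun j hj => by_contra fun hju => ?_⟩
  have := hmax (s j * u)
    ⟨mul_mem (cs.simple_mem_parabolic hj) hu, cs.rweakLE_simple_mul huw (hw j hj) hju⟩
  rw [cs.not_isLeftDescent_iff.mp hju] at this
  omega

theorem rweakLE_of_forall_isLeftDescent {u : W} (hdesc : ∀ j ∈ J, cs.IsLeftDescent u j)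
    {v : W} (hv : v ∈ parabolic cs J) : rweakLE cs v u := by
  induction hn : ℓ v using Nat.strong_induction_on generalizing v with
  | _ n ih =>
    by_cases hv1 : v = 1
    · exact hv1 ▸ cs.rweakLE_one u
    obtain ⟨j, hj, hvj⟩ := cs.exists_isLeftDescent_of_mem_parabolic hv hv1
    have hle := cs.rweakLE_simple_mul
      (ih _ (hn ▸ hvj) (mul_mem (cs.simple_mem_parabolic hj) hv) rfl) (hdesc j hj)
      (cs.isLeftDescent_iff_not_isLeftDescent_mul.mp hvj)
    rwa [simple_mul_simple_cancel_left] at hle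

theorem finite_parabolic_of_forall_isLeftDescent {u : W}
    (hdesc : ∀ j ∈ J, cs.IsLeftDescent u j) : (parabolic cs J : Set W).Finite :=
  (cs.finite_setOf_rweakLE u).subset fun _ hv => cs.rweakLE_of_forall_isLeftDescent hdesc hv

theorem isLeftDescent_of_forall_length_le {w : W} (hw : w ∈ parabolic cs J)
    (hmax : ∀ u ∈ parabolic cs J, ℓ u ≤ ℓ w) {j : B} (hj : j ∈ J) : cs.IsLeftDescent w j := by
  by_contra h
  have := hmax _ (mul_mem (cs.simple_mem_parabolic hj) hw)
  rw [cs.not_isLeftDescent_iff.mp h] at this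
  omega

theorem isJoin_of_forall_length_le {w : W} (hw : w ∈ parabolic cs J)
    (hmax : ∀ u ∈ parabolic cs J, ℓ u ≤ ℓ w) :
    (∀ j ∈ J, rweakLE cs (s j) w) ∧
      ∀ w' : W, (∀ j ∈ J, rweakLE cs (s j) w') → rweakLE cs w w' := by
  refine ⟨fun j hj => cs.rweakLE_simple_iff.mpr (cs.isLeftDescent_of_forall_length_le hw hmax hj),
    fun w' hw' => ?_⟩
  obtain ⟨u, hu, huw', hdesc⟩ :=
    cs.exists_rweakLE_forall_isLeftDescent fun j hj => cs.rweakLE_simple_iff.mp (hw' j hj)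
  have hwu := cs.rweakLE_of_forall_isLeftDescent hdesc hw
  rwa [cs.eq_of_rweakLE_of_length_le hwu (hmax u hu)]

theorem forall_length_le_of_isJoin {w : W} (hub : ∀ j ∈ J, rweakLE cs (s j) w)
    (hleast : ∀ w' : W, (∀ j ∈ J, rweakLE cs (s j) w') → rweakLE cs w w') :
    (w ∈ parabolic cs J ∧ ∀ u ∈ parabolic cs J, ℓ u ≤ ℓ w) ∧ (parabolic cs J : Set W).Finite := by
  obtain ⟨u, hu, huw, hdesc⟩ :=
    cs.exists_rweakLE_forall_isLeftDescent fun j hj => cs.rweakLE_simple_iff.mp (hub j hj)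
  have hwu := hleast u fun j hj => cs.rweakLE_of_forall_isLeftDescent hdesc
    (cs.simple_mem_parabolic hj)
  obtain rfl := cs.eq_of_rweakLE_of_length_le huw (cs.length_le_of_rweakLE hwu)
  exact ⟨⟨hu, fun v hv => cs.length_le_of_rweakLE (cs.rweakLE_of_forall_isLeftDescent hdesc hv)⟩,
    cs.finite_parabolic_of_forall_isLeftDescent hdesc⟩

end Parabolic

end CoxeterSystem

/-- In a Coxeter group, `w` is the longest element of a finite standard parabolic
subgroup `W_J` iff the join of `{s_j : j ∈ J}` in right weak order exists and equals
`w`; the join of the simple reflections in `J` exists iff `W_J` is finite; and if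
`W_J` is infinite then `{s_j : j ∈ J}` has no upper bound in weak order. -/
theorem stmt_3 {B W : Type*} [Group W] {M : CoxeterMatrix B}
    (cs : CoxeterSystem M W) (J : Set B) :
    (∀ w : W,
      (((w ∈ parabolic cs J ∧ ∀ u ∈ parabolic cs J, cs.length u ≤ cs.length w) ∧
          (parabolic cs J : Set W).Finite)
        ↔ ((∀ j ∈ J, rweakLE cs (cs.simple j) w) ∧
            ∀ w' : W, (∀ j ∈ J, rweakLE cs (cs.simple j) w') → rweakLE cs w w'))) ∧
    ((parabolic cs J : Set W).Finite ↔
      ∃ w : W, (∀ j ∈ J, rweakLE cs (cs.simple j) w) ∧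
        ∀ w' : W, (∀ j ∈ J, rweakLE cs (cs.simple j) w') → rweakLE cs w w') ∧
    (¬ (parabolic cs J : Set W).Finite →
      ∀ w : W, ¬ ∀ j ∈ J, rweakLE cs (cs.simple j) w) := by
  refine ⟨fun w => ⟨fun ⟨⟨hw, hmax⟩, _⟩ => cs.isJoin_of_forall_length_le hw hmax,
      fun ⟨hub, hleast⟩ => cs.forall_length_le_of_isJoin hub hleast⟩,
    ⟨fun hfin => ?_, fun ⟨_, hub, hleast⟩ => (cs.forall_length_le_of_isJoin hub hleast).2⟩,
    fun hinf w hub => hinf ?_⟩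
  · obtain ⟨w, hw, hmax⟩ := Set.exists_max_image _ cs.length hfin ⟨1, one_mem _⟩
    exact ⟨w, cs.isJoin_of_forall_length_le hw hmax⟩
  · obtain ⟨_, -, -, hdesc⟩ :=
      cs.exists_rweakLE_forall_isLeftDescent fun j hj => cs.rweakLE_simple_iff.mp (hub j hj)
    exact cs.finite_parabolic_of_forall_isLeftDescent hdesc
end

section
/- Let f : P → Q be a monotone map of finite posets such that for every x ∈ Q the preimage f⁻¹(Q_{≤x}) = {z ∈ P : f(z) ≤ x} has a maximum element. Then the order complexes of P and Q are homotopy equivalent. -/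
open Finset
open scoped Classical
set_option linter.unusedSectionVars false

/-- The geometric realization of the order complex of a poset `P`: the space of convex
combinations of elements of `P` whose support is a chain. -/
abbrev OrdCpx (P : Type*) [PartialOrder P] : Type _ :=
  {f : P → ℝ // (∀ x, 0 ≤ f x) ∧ (∑ᶠ x, f x) = 1 ∧ IsChain (· ≤ ·) {x | f x ≠ 0}}

section Aux

variable {P : Type*} {Q : Type*} {R : Type*}
  [PartialOrder P] [PartialOrder Q] [PartialOrder R]

section Rk
variable [Fintype P]

/-- rank function: number of elements strictly below `p`. -/
noncomputable def rk (p : P) : ℕ := (Finset.univ.filter (fun x => x < p)).card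

lemma rk_lt_card (p : P) : rk p < Fintype.card P := by
  rw [← Finset.card_univ]
  apply Finset.card_lt_card
  rw [Finset.ssubset_iff_of_subset (Finset.subset_univ _)]
  exact ⟨p, Finset.mem_univ p, by simp⟩

lemma rk_lt_rk {p q : P} (h : p < q) : rk p < rk q := by
  apply Finset.card_lt_card
  rw [Finset.ssubset_iff_of_subset]
  · exact ⟨p, by simpa using h, by simp⟩
  · intro x hx
    simp only [Finset.mem_filter, Finset.mem_univ, true_and] at hx ⊢
    exact hx.trans h

end Rk

/-- switching schedule: element of rank `r` (out of `N`) switches during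
`t ∈ [(N-1-r)/N, (N-r)/N]`, so higher-rank elements switch first. -/
noncomputable def sfun (N r : ℕ) (t : ℝ) : ℝ :=
  max 0 (min 1 ((N : ℝ) * t - ((N : ℝ) - 1 - (r : ℝ))))

lemma sfun_nonneg (N r : ℕ) (t : ℝ) : 0 ≤ sfun N r t := le_max_left _ _

lemma sfun_le_one (N r : ℕ) (t : ℝ) : sfun N r t ≤ 1 :=
  max_le zero_le_one (min_le_left _ _)

lemma sfun_zero {N r : ℕ} (h : r < N) : sfun N r 0 = 0 := by
  have hr : (r : ℝ) + 1 ≤ N := by exact_mod_cast h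
  have : (N : ℝ) * 0 - ((N : ℝ) - 1 - (r : ℝ)) ≤ 0 := by linarith
  exact max_eq_left ((min_le_right _ _).trans this)

lemma sfun_one {N r : ℕ} : sfun N r 1 = 1 := by
  have hr : (0 : ℝ) ≤ (r : ℝ) := Nat.cast_nonneg r
  have : (1 : ℝ) ≤ (N : ℝ) * 1 - ((N : ℝ) - 1 - (r : ℝ)) := by linarith
  rw [sfun, min_eq_left this]
  exact max_eq_right zero_le_one

lemma sfun_key {N r r' : ℕ} {t : ℝ} (hr : r < r') (h : sfun N r t ≠ 0) :
    sfun N r' t = 1 := by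
  have h0 : 0 < min 1 ((N : ℝ) * t - ((N : ℝ) - 1 - (r : ℝ))) := by
    by_contra hle
    push_neg at hle
    exact h (max_eq_left hle)
  have h1 : (0:ℝ) < (N : ℝ) * t - ((N : ℝ) - 1 - (r : ℝ)) :=
    lt_of_lt_of_le h0 (min_le_right _ _)
  have hrr : (r : ℝ) + 1 ≤ (r' : ℝ) := by exact_mod_cast hr
  have : (1 : ℝ) ≤ (N : ℝ) * t - ((N : ℝ) - 1 - (r' : ℝ)) := by linarith
  rw [sfun, min_eq_left this]
  exact max_eq_right zero_le_one

section Maps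
variable [Fintype P] [Fintype Q] [Fintype R]

/-- Pushforward of a weight function along `h`. -/
noncomputable def push (h : P → Q) (μ : P → ℝ) : Q → ℝ :=
  fun y => ∑ p, μ p * (if h p = y then 1 else 0)

/-- The prism homotopy between `push h` and `push k`. -/
noncomputable def mid (h k : P → Q) (t : ℝ) (μ : P → ℝ) : Q → ℝ :=
  fun y => ∑ p, μ p *
    ((1 - sfun (Fintype.card P) (rk p) t) * (if h p = y then (1:ℝ) else 0)
      + sfun (Fintype.card P) (rk p) t * (if k p = y then (1:ℝ) else 0))

lemma mid_zero (h k : P → Q) (μ : P → ℝ) : mid h k 0 μ = push h μ := by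
  funext y
  refine Finset.sum_congr rfl fun p _ => ?_
  rw [sfun_zero (rk_lt_card p)]
  ring

lemma mid_one (h k : P → Q) (μ : P → ℝ) : mid h k 1 μ = push k μ := by
  funext y
  refine Finset.sum_congr rfl fun p _ => ?_
  rw [sfun_one]
  ring

lemma mid_nonneg {h k : P → Q} {μ : P → ℝ} (hμ : ∀ p, 0 ≤ μ p) (t : ℝ) (y : Q) :
    0 ≤ mid h k t μ y := by
  refine Finset.sum_nonneg fun p _ => mul_nonneg (hμ p) (add_nonneg
    (mul_nonneg (by linarith [sfun_le_one (Fintype.card P) (rk p) t]) ?_)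
    (mul_nonneg (sfun_nonneg _ _ _) ?_)) <;> positivity

lemma mid_sum (h k : P → Q) (t : ℝ) (μ : P → ℝ) :
    ∑ y, mid h k t μ y = ∑ p, μ p := by
  simp only [mid]
  rw [Finset.sum_comm]
  refine Finset.sum_congr rfl fun p _ => ?_
  rw [← Finset.mul_sum, Finset.sum_add_distrib, ← Finset.mul_sum, ← Finset.mul_sum]
  simp [Finset.sum_ite_eq]

lemma push_sum (h : P → Q) (μ : P → ℝ) : ∑ y, push h μ y = ∑ p, μ p := by
  simp only [push]
  rw [Finset.sum_comm]
  refine Finset.sum_congr rfl fun p _ => ?_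
  rw [← Finset.mul_sum]
  simp [Finset.sum_ite_eq]

lemma mid_support {h k : P → Q} {μ : P → ℝ} {t : ℝ} {y : Q}
    (hy : mid h k t μ y ≠ 0) :
    ∃ p, μ p ≠ 0 ∧ ((h p = y ∧ sfun (Fintype.card P) (rk p) t ≠ 1)
      ∨ (k p = y ∧ sfun (Fintype.card P) (rk p) t ≠ 0)) := by
  obtain ⟨p, -, hp⟩ := Finset.exists_ne_zero_of_sum_ne_zero hy
  refine ⟨p, fun h0 => hp (by simp [h0]), ?_⟩
  by_contra hcon
  push_neg at hcon
  obtain ⟨hc1, hc2⟩ := hcon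
  apply hp
  by_cases e1 : h p = y <;> by_cases e2 : k p = y
  · exact absurd ((hc1 e1).symm.trans (hc2 e2)) one_ne_zero
  · rw [hc1 e1]; simp [e1, e2]
  · rw [hc2 e2]; simp [e1, e2]
  · simp [e1, e2]

lemma push_support {h : P → Q} {μ : P → ℝ} {y : Q} (hy : push h μ y ≠ 0) :
    ∃ p, μ p ≠ 0 ∧ h p = y := by
  obtain ⟨p, -, hp⟩ := Finset.exists_ne_zero_of_sum_ne_zero hy
  by_cases e : h p = y
  · exact ⟨p, fun h0 => hp (by simp [h0]), e⟩
  · exact absurd (by simp [e]) hp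

lemma push_chain {h : P → Q} (hh : Monotone h) {μ : P → ℝ}
    (hc : IsChain (· ≤ ·) {p | μ p ≠ 0}) :
    IsChain (· ≤ ·) {y | push h μ y ≠ 0} := by
  intro y1 h1 y2 h2 hne
  obtain ⟨p1, hp1, e1⟩ := push_support h1
  obtain ⟨p2, hp2, e2⟩ := push_support h2
  rcases eq_or_ne p1 p2 with rfl | hpne
  · exact absurd (e1 ▸ e2) hne
  · rcases hc hp1 hp2 hpne with hle | hle
    · exact Or.inl (e1 ▸ e2 ▸ hh hle)
    · exact Or.inr (e2 ▸ e1 ▸ hh hle)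

lemma mid_chain {h k : P → Q} (hh : Monotone h) (hk : Monotone k) (hle : h ≤ k)
    {μ : P → ℝ} (hc : IsChain (· ≤ ·) {p | μ p ≠ 0}) (t : ℝ) :
    IsChain (· ≤ ·) {y | mid h k t μ y ≠ 0} := by
  intro y1 h1 y2 h2 hne
  obtain ⟨p1, hp1, hcase1⟩ := mid_support h1
  obtain ⟨p2, hp2, hcase2⟩ := mid_support h2
  have hcomp : p1 ≤ p2 ∨ p2 ≤ p1 := by
    rcases eq_or_ne p1 p2 with rfl | hpne
    · exact Or.inl le_rfl
    · exact hc hp1 hp2 hpne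
  -- key: if p < p' and sfun at p isn't 0 then sfun at p' is 1
  rcases hcase1 with ⟨e1, s1⟩ | ⟨e1, s1⟩ <;> rcases hcase2 with ⟨e2, s2⟩ | ⟨e2, s2⟩
  · -- h, h
    rcases hcomp with hle' | hle'
    · exact Or.inl (e1 ▸ e2 ▸ hh hle')
    · exact Or.inr (e2 ▸ e1 ▸ hh hle')
  · -- h p1 = y1 (s1 ≠ 1), k p2 = y2 (s2 ≠ 0)
    rcases hcomp with hle' | hle'
    · exact Or.inl (e1 ▸ e2 ▸ le_trans (hh hle') (hle p2))
    · rcases hle'.lt_or_eq with hlt | heq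
      · exact absurd (sfun_key (rk_lt_rk hlt) s2) s1
      · exact Or.inl (e1 ▸ e2 ▸ heq ▸ hle p2)
  · -- k p1 = y1 (s1 ≠ 0), h p2 = y2 (s2 ≠ 1)
    rcases hcomp with hle' | hle'
    · rcases hle'.lt_or_eq with hlt | heq
      · exact absurd (sfun_key (rk_lt_rk hlt) s1) s2
      · exact Or.inr (e2 ▸ e1 ▸ heq ▸ hle p1)
    · exact Or.inr (e2 ▸ e1 ▸ le_trans (hh hle') (hle p1))
  · -- k, k
    rcases hcomp with hle' | hle'
    · exact Or.inl (e1 ▸ e2 ▸ hk hle')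
    · exact Or.inr (e2 ▸ e1 ▸ hk hle')

lemma push_comp (g : Q → R) (h : P → Q) (μ : P → ℝ) :
    push g (push h μ) = push (g ∘ h) μ := by
  funext y
  simp only [push, Function.comp, Finset.sum_mul]
  rw [Finset.sum_comm]
  refine Finset.sum_congr rfl fun p _ => ?_
  have hq : ∀ q : Q, μ p * (if h p = q then (1:ℝ) else 0) * (if g q = y then (1:ℝ) else 0)
      = if h p = q then μ p * (if g q = y then (1:ℝ) else 0) else 0 := by
    intro q; split_ifs <;> ring
  rw [Finset.sum_congr rfl fun q _ => hq q, Finset.sum_ite_eq]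
  simp

lemma push_id (μ : P → ℝ) : push (id : P → P) μ = μ := by
  funext y
  simp [push, mul_ite, Finset.sum_ite_eq']

end Maps

section Cont
variable [Fintype P] [Fintype Q] [Fintype R]

lemma ordcpx_sum (μ : OrdCpx P) : ∑ p, μ.1 p = 1 := by
  rw [← finsum_eq_sum_of_fintype]; exact μ.2.2.1

/-- The continuous map on order complexes induced by a monotone map. -/
noncomputable def pushC {h : P → Q} (hh : Monotone h) : C(OrdCpx P, OrdCpx Q) where
  toFun μ := ⟨push h μ.1,
    fun y => Finset.sum_nonneg fun p _ => mul_nonneg (μ.2.1 p) (by positivity),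
    by rw [finsum_eq_sum_of_fintype, push_sum, ← finsum_eq_sum_of_fintype]; exact μ.2.2.1,
    push_chain hh μ.2.2.2⟩
  continuous_toFun := by
    apply Continuous.subtype_mk
    apply continuous_pi
    intro y
    simp only [push]
    apply continuous_finset_sum
    intro p _
    exact ((continuous_apply p).comp continuous_subtype_val).mul continuous_const

lemma sfun_continuous (N r : ℕ) : Continuous (sfun N r) := by
  have : Continuous fun t : ℝ => (N:ℝ) * t - ((N:ℝ) - 1 - (r:ℝ)) := by fun_prop
  exact continuous_const.max (continuous_const.min this)

/-- The homotopy between induced maps of pointwise-comparable monotone maps. -/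
noncomputable def midHomotopy {h k : P → Q} (hh : Monotone h) (hk : Monotone k)
    (hle : h ≤ k) : ContinuousMap.Homotopy (pushC hh) (pushC hk) where
  toFun x := ⟨mid h k (x.1 : ℝ) x.2.1,
    fun y => mid_nonneg x.2.2.1 _ y,
    by rw [finsum_eq_sum_of_fintype, mid_sum, ← finsum_eq_sum_of_fintype]; exact x.2.2.2.1,
    mid_chain hh hk hle x.2.2.2.2 _⟩
  continuous_toFun := by
    apply Continuous.subtype_mk
    apply continuous_pi
    intro y
    simp only [mid]
    apply continuous_finset_sum
    intro p _
    have hs : Continuous fun x : unitInterval × OrdCpx P =>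
        sfun (Fintype.card P) (rk p) (x.1 : ℝ) :=
      (sfun_continuous _ _).comp (continuous_subtype_val.comp continuous_fst)
    have hμ : Continuous fun x : unitInterval × OrdCpx P => x.2.1 p :=
      (continuous_apply p).comp (continuous_subtype_val.comp continuous_snd)
    exact hμ.mul (((continuous_const.sub hs).mul continuous_const).add
      (hs.mul continuous_const))
  map_zero_left μ := by
    apply Subtype.ext
    show mid h k ((0 : unitInterval) : ℝ) μ.1 = push h μ.1
    rw [show ((0 : unitInterval) : ℝ) = 0 from rfl, mid_zero]
  map_one_left μ := by
    apply Subtype.ext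
    show mid h k ((1 : unitInterval) : ℝ) μ.1 = push k μ.1
    rw [show ((1 : unitInterval) : ℝ) = 1 from rfl, mid_one]

lemma pushC_homotopic {h k : P → Q} (hh : Monotone h) (hk : Monotone k) (hle : h ≤ k) :
    (pushC hh).Homotopic (pushC hk) := ⟨midHomotopy hh hk hle⟩

lemma pushC_comp {g : Q → R} {h : P → Q} (hg : Monotone g) (hh : Monotone h) :
    (pushC hg).comp (pushC hh) = pushC (hg.comp hh) :=
  ContinuousMap.ext fun μ => Subtype.ext (push_comp g h μ.1)

lemma pushC_id : pushC (monotone_id : Monotone (id : P → P)) = ContinuousMap.id _ :=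
  ContinuousMap.ext fun μ => Subtype.ext (push_id μ.1)

end Cont
end Aux

/-- Quillen fiber lemma (special case): if `f : P → Q` is a monotone map of finite posets
such that for each `x` in `Q` the preimage `{z : f z ≤ x}` has a maximum element, then
the order complexes of `P` and `Q` are homotopy equivalent. -/
theorem stmt_6 {P Q : Type*} [PartialOrder P] [PartialOrder Q] [Finite P] [Finite Q]
    (f : P → Q) (hf : Monotone f)
    (hfib : ∀ x : Q, ∃ m : P, f m ≤ x ∧ ∀ z : P, f z ≤ x → z ≤ m) :
    Nonempty (ContinuousMap.HomotopyEquiv (OrdCpx P) (OrdCpx Q)) := by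
  cases nonempty_fintype P
  cases nonempty_fintype Q
  choose g hg1 hg2 using hfib
  have hgmono : Monotone g := fun x y hxy => hg2 y (g x) ((hg1 x).trans hxy)
  have h1 : (id : P → P) ≤ g ∘ f := fun p => hg2 (f p) p le_rfl
  have h2 : (f ∘ g : Q → Q) ≤ id := hg1
  refine ⟨{
    toFun := pushC hf
    invFun := pushC hgmono
    left_inv := ?_
    right_inv := ?_ }⟩
  · rw [pushC_comp hgmono hf, ← pushC_id]
    exact (pushC_homotopic monotone_id (hgmono.comp hf) h1).symm
  · rw [pushC_comp hf hgmono, ← pushC_id]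
    exact pushC_homotopic (hf.comp hgmono) monotone_id h2
end

section
/- Let B be a crystal poset (a graded poset with cover relations colored by an index set I, covers u ⋖ f_i(u)) equipped with a map κ to a Coxeter group W satisfying: (i) κ is constant along a cover u ⋖ f_i(u) whenever e_i(u) ≠ 0, and otherwise κ(f_i(u)) ∈ {κ(u), s_iκ(u)}; (ii) e_i(u) = 0 implies s_iκ(u) > κ(u) in weak order. Then κ is order-preserving from B to the left weak Bruhat order on W. -/
/-- The left weak Bruhat order on a Coxeter group: `u ≤ v` iff `ℓ(v u⁻¹) + ℓ(u) = ℓ(v)`. -/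
noncomputable def lweakLE {B W : Type*} [Group W] {M : CoxeterMatrix B}
    (cs : CoxeterSystem M W) (u v : W) : Prop :=
  cs.length (v * u⁻¹) + cs.length u = cs.length v


private lemma lweak_trans' {B W : Type*} [Group W] {M : CoxeterMatrix B}
    (cs : CoxeterSystem M W) {a b c : W} (hab : lweakLE cs a b) (hbc : lweakLE cs b c) :
    lweakLE cs a c := by
  unfold lweakLE at *
  have t1 : cs.length (c * a⁻¹) ≤ cs.length (c * b⁻¹) + cs.length (b * a⁻¹) := by
    simpa [mul_assoc] using cs.length_mul_le (c * b⁻¹) (b * a⁻¹)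
  have t2 : cs.length c ≤ cs.length (c * a⁻¹) + cs.length a := by
    simpa [mul_assoc] using cs.length_mul_le (c * a⁻¹) a
  omega

/-- Let `B` be a crystal poset, with `C i u v` meaning `v = f_i(u)` (an `i`-colored
cover) and the order generated by the covers, and let `κ : B → W` be a key map
satisfying the standard axioms: (i) `κ(f_i u) = κ(u)` whenever `e_i(u) ≠ 0`, and
otherwise `κ(f_i u) ∈ {κ(u), s_i κ(u)}`; (ii) `e_i(u) = 0` implies `s_i κ(u) > κ(u)`
in left weak order.  Then `κ` is order-preserving into the left weak Bruhat order. -/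
theorem stmt_10 {Crys I W : Type*} [Group W] {M : CoxeterMatrix I}
    (cs : CoxeterSystem M W)
    (C : I → Crys → Crys → Prop)
    (hup : ∀ (i : I) (u v v' : Crys), C i u v → C i u v' → v = v')
    (hdown : ∀ (i : I) (u u' v : Crys), C i u v → C i u' v → u = u')
    (κ : Crys → W)
    (h1 : ∀ (i : I) (u v : Crys), C i u v → (∃ u', C i u' u) → κ v = κ u)
    (h2 : ∀ (i : I) (u v : Crys), C i u v → κ v = κ u ∨ κ v = cs.simple i * κ u)
    (h3 : ∀ (i : I) (u : Crys), ¬(∃ u', C i u' u) →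
      cs.length (cs.simple i * κ u) = cs.length (κ u) + 1) :
    ∀ u v : Crys, Relation.ReflTransGen (fun a b => ∃ i, C i a b) u v →
      lweakLE cs (κ u) (κ v) := by
  intro u v h
  induction h with
  | refl => simp [lweakLE]
  | @tail b c _ hbc ih =>
    obtain ⟨i, hC⟩ := hbc
    refine lweak_trans' cs ih ?_
    by_cases he : ∃ u', C i u' b
    · rw [h1 i b c hC he]; simp [lweakLE]
    · rcases h2 i b c hC with heq | heq
      · rw [heq]; simp [lweakLE]
      · unfold lweakLE
        rw [heq]
        simp [mul_assoc, cs.length_simple, h3 i b he, Nat.add_comm]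
end

section
/- In a crystal poset with key map κ satisfying the standard axioms, if distinct elements u and u' are both covered by v and κ(u) = κ(u'), then κ(v) = κ(u). -/
/-!
If `κ v` differed from `κ u`, the axiom for the two covers would give `κ v = sᵢ κ u = sⱼ κ u'`,
so `sᵢ = sⱼ`. Simple reflections of a Coxeter system are pairwise distinct, as one sees in the
geometric representation on `⊕ᵢ ℝ αᵢ`, where `sᵢ αᵢ = -αᵢ` while `sⱼ` keeps the `αᵢ`-coordinate
of `αᵢ` for `j ≠ i`. Hence `i = j`, and then `v` has the two distinct `i`-lower covers `u`, `u'`.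
-/

open Real Polynomial.Chebyshev

namespace Polynomial.Chebyshev

theorem S_real_eval_two_mul_cos_eq_zero {φ : ℝ} {n : ℤ} (hφ : sin φ ≠ 0)
    (hn : sin ((n + 1) * φ) = 0) : (S ℝ n).eval (2 * cos φ) = 0 := by
  have h := S_two_mul_real_cos φ n
  rw [hn] at h
  exact (mul_eq_zero.1 h).resolve_right hφ

theorem S_real_eval_add_S_real_eval_sub_one_two_mul_cos_eq_zero {φ : ℝ} {n : ℤ}
    (hφ : sin φ ≠ 0) (hn : sin ((n + 1) * φ) + sin (n * φ) = 0) :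
    (S ℝ n).eval (2 * cos φ) + (S ℝ (n - 1)).eval (2 * cos φ) = 0 := by
  have h := S_two_mul_real_cos φ (n - 1)
  push_cast at h
  rw [sub_add_cancel] at h
  have hsum : ((S ℝ n).eval (2 * cos φ) + (S ℝ (n - 1)).eval (2 * cos φ)) * sin φ = 0 := by
    rw [add_mul, S_two_mul_real_cos, h, hn]
  exact (mul_eq_zero.1 hsum).resolve_right hφ

/-- These are the two coefficients in `Module.reflection_mul_reflection_pow`; for `m ≥ 3` they
vanish at `t = 2 cos (2π / m)`. -/
theorem S_real_eval_two_mul_cos_two_pi_div_coeffs_eq_zero {m : ℕ} (hm : 3 ≤ m) :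
    let t := 2 * cos (2 * π / m)
    (S ℝ ((m - 2) / 2)).eval t * ((S ℝ ((m - 1) / 2)).eval t + (S ℝ ((m - 3) / 2)).eval t) = 0 ∧
    (S ℝ ((m - 1) / 2)).eval t * ((S ℝ (m / 2)).eval t + (S ℝ ((m - 2) / 2)).eval t) = 0 := by
  intro t
  have hsin : sin (2 * π / m) ≠ 0 := by
    refine (sin_pos_of_pos_of_lt_pi (by positivity) ?_).ne'
    rw [div_lt_iff₀ (by positivity)]
    have : (3 : ℝ) ≤ m := by exact_mod_cast hm
    nlinarith [pi_pos]
  obtain ⟨k, rfl | rfl⟩ := Nat.even_or_odd' m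
  · have hk0 : (k : ℝ) ≠ 0 := by
      have : 0 < k := by omega
      positivity
    have hk : (S ℝ (k - 1)).eval t = 0 := by
      refine S_real_eval_two_mul_cos_eq_zero hsin ?_
      push_cast
      rw [show ((k : ℝ) - 1 + 1) * (2 * π / (2 * k)) = π by field_simp; ring]
      exact sin_pi
    have e1 : ((2 * k : ℕ) - 2 : ℤ) / 2 = k - 1 := by omega
    have e2 : ((2 * k : ℕ) - 1 : ℤ) / 2 = k - 1 := by omega
    rw [e1, e2, hk, zero_mul, zero_mul]
    exact ⟨rfl, rfl⟩
  · have hk : (S ℝ k).eval t + (S ℝ (k - 1)).eval t = 0 := by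
      refine S_real_eval_add_S_real_eval_sub_one_two_mul_cos_eq_zero hsin ?_
      push_cast
      have hk1 : (2 * (k : ℝ) + 1) ≠ 0 := by positivity
      rw [show ((k : ℝ) + 1) * (2 * π / (2 * k + 1)) = π / (2 * k + 1) + π by field_simp; ring,
        show (k : ℝ) * (2 * π / (2 * k + 1)) = π - π / (2 * k + 1) by field_simp; ring,
        sin_add_pi, sin_pi_sub, neg_add_cancel]
    have e1 : ((2 * k + 1 : ℕ) - 2 : ℤ) / 2 = k - 1 := by omega
    have e2 : ((2 * k + 1 : ℕ) - 1 : ℤ) / 2 = k := by omega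
    have e3 : ((2 * k + 1 : ℕ) - 3 : ℤ) / 2 = k - 1 := by omega
    have e4 : ((2 * k + 1 : ℕ) : ℤ) / 2 = k := by omega
    rw [e1, e2, e3, e4, hk, mul_zero, mul_zero]
    exact ⟨rfl, rfl⟩

end Polynomial.Chebyshev

namespace Module

variable {V : Type*} [AddCommGroup V] [Module ℝ V] {x y : V} {f g : Dual ℝ V}

theorem reflection_mul_reflection_pow_eq_one (hf : f x = 2) (hg : g y = 2) {m : ℕ} (hm : 2 ≤ m)
    (hfy : f y = -2 * cos (π / m)) (hgx : g x = -2 * cos (π / m)) :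
    (reflection hf * reflection hg) ^ m = 1 := by
  rcases hm.eq_or_lt with rfl | hm
  · simp only [Nat.cast_ofNat, cos_pi_div_two, mul_zero] at hfy hgx
    ext z
    simp only [pow_two, LinearEquiv.mul_apply, reflection_apply, map_sub, map_smul, hf, hg, hfy,
      hgx, LinearEquiv.coe_one, id_eq]
    module
  · apply LinearEquiv.toLinearMap_injective
    have ht : 2 * cos (2 * π / m) = f y * g x - 2 := by
      rw [hfy, hgx, mul_div_assoc, cos_two_mul]
      ring
    obtain ⟨hA, hB⟩ := S_real_eval_two_mul_cos_two_pi_div_coeffs_eq_zero hm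
    rw [reflection_mul_reflection_pow hf hg m _ ht, hA, hB]
    simp

end Module

namespace CoxeterMatrix

variable {B : Type*} (M : CoxeterMatrix B)

/-- The entry `M a b = 0` (that is, `m = ∞`) gives `-cos 0 = -1`, since `π / 0 = 0`. -/
noncomputable def cosForm (a b : B) : ℝ := -cos (π / M a b)

noncomputable def rootCoform (a : B) : Module.Dual ℝ (B →₀ ℝ) :=
  2 • Finsupp.linearCombination ℝ (M.cosForm a)

theorem rootCoform_single (a b : B) :
    M.rootCoform a (Finsupp.single b 1) = -2 * cos (π / M a b) := by
  simp [rootCoform, cosForm]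

theorem rootCoform_single_self (a : B) : M.rootCoform a (Finsupp.single a 1) = 2 := by
  simp [rootCoform_single]

noncomputable def geometricReflection (a : B) : (B →₀ ℝ) ≃ₗ[ℝ] (B →₀ ℝ) :=
  Module.reflection (M.rootCoform_single_self a)

theorem isLiftable_geometricReflection : M.IsLiftable M.geometricReflection := by
  intro a b
  rcases eq_or_ne a b with rfl | hab
  · ext z
    simp [geometricReflection, Module.involutive_reflection _ z]
  rcases Nat.eq_zero_or_pos (M a b) with h0 | hpos
  · rw [h0, pow_zero]
  have hm : 2 ≤ M a b := by
    have := M.off_diagonal a b hab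
    omega
  refine Module.reflection_mul_reflection_pow_eq_one _ _ hm (M.rootCoform_single a b) ?_
  rw [rootCoform_single, M.symmetric]

end CoxeterMatrix

theorem CoxeterSystem.simple_injective {B W : Type*} [Group W] {M : CoxeterMatrix B}
    (cs : CoxeterSystem M W) : Function.Injective cs.simple := by
  intro i j hij
  by_contra hne
  have hrefl : M.geometricReflection i = M.geometricReflection j := by
    rw [← cs.lift_apply_simple M.isLiftable_geometricReflection, hij, cs.lift_apply_simple]
  have hcoord := congrArg (fun r ↦ r (Finsupp.single i 1) i) hrefl
  norm_num [CoxeterMatrix.geometricReflection, Module.reflection_apply, Ne.symm hne] at hcoord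

theorem stmt_11_general {Crys I W : Type*} [Group W] {M : CoxeterMatrix I}
    (cs : CoxeterSystem M W)
    (C : I → Crys → Crys → Prop)
    (hdown : ∀ (i : I) (u u' v : Crys), C i u v → C i u' v → u = u')
    (κ : Crys → W)
    (h2 : ∀ (i : I) (u v : Crys), C i u v → κ v = κ u ∨ κ v = cs.simple i * κ u)
    {u u' v : Crys} {i j : I}
    (hne : u ≠ u') (hcov : C i u v) (hcov' : C j u' v) (hκ : κ u = κ u') :
    κ v = κ u := by
  rcases h2 i u v hcov with hv | hv
  · exact hv
  rcases h2 j u' v hcov' with hv' | hv'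
  · rw [hv', hκ]
  have hsimple : cs.simple i * κ u = cs.simple j * κ u := by rw [← hv, hv', hκ]
  have hij : i = j := cs.simple_injective (mul_right_cancel hsimple)
  subst hij
  exact absurd (hdown i u u' v hcov hcov') hne

/-- In a crystal poset with a key map `κ` satisfying the standard axioms, if distinct
elements `u` and `u'` are both covered by `v` and `κ(u) = κ(u')`, then `κ(v) = κ(u)`. -/
theorem stmt_11 {Crys I W : Type*} [Group W] {M : CoxeterMatrix I}
    (cs : CoxeterSystem M W)
    (C : I → Crys → Crys → Prop)
    (hup : ∀ (i : I) (u v v' : Crys), C i u v → C i u v' → v = v')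
    (hdown : ∀ (i : I) (u u' v : Crys), C i u v → C i u' v → u = u')
    (κ : Crys → W)
    (h1 : ∀ (i : I) (u v : Crys), C i u v → (∃ u', C i u' u) → κ v = κ u)
    (h2 : ∀ (i : I) (u v : Crys), C i u v → κ v = κ u ∨ κ v = cs.simple i * κ u)
    (h3 : ∀ (i : I) (u : Crys), ¬(∃ u', C i u' u) →
      cs.length (cs.simple i * κ u) = cs.length (κ u) + 1)
    {u u' v : Crys} {i j : I}
    (hne : u ≠ u') (hcov : C i u v) (hcov' : C j u' v) (hκ : κ u = κ u') :
    κ v = κ u :=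
  stmt_11_general cs C hdown κ h2 hne hcov hcov' hκ
end

section
/- Let Φ be a finite irreducible root system with simple roots indexed by I, and let K ⊆ I with K ≠ I and K^c = I∖K nonempty. If the lowest coset representative w₀(I)·w₀(K) of w₀W_K equals w₀(J) for some J ⊆ K^c, then K = ∅. -/
/-!
Let `W_S` be the group generated by the `s i` with `i ∈ S`. An element of `W_S` moves every
vector by an element of `span (α '' S)`, and if it sends a positive root `β` out of `P`, the
sum of `β` and the positive root `-w β` lies in that span, so `β` does too, since the cone
spanned by the simple roots is simplicial. By the exchange argument (`w (α i) ∈ P` forces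
`ℓ(w) < ℓ(w s_i)`), the longest element `w₀` sends every positive root out of `P`. Writing
`w₀ = w₀(J) w₀(K)⁻¹`, the map `w₀(K)⁻¹` therefore sends the positive roots outside
`span (α '' K)` injectively into `span (α '' J)`, and finiteness makes this a bijection: every
root lies in one of the two spans. Roots from different spans are orthogonal, since otherwise
reflecting one in the other yields a root in neither span, so irreducibility forces `K = ∅`.
-/

open scoped RealInnerProductSpace

noncomputable def coxLen {V : Type*} [NormedAddCommGroup V] [InnerProductSpace ℝ V]
    {I : Type*} (s : I → (V ≃ₗ[ℝ] V)) (w : V ≃ₗ[ℝ] V) : ℕ :=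
  sInf {n : ℕ | ∃ l : List I, l.length = n ∧ (l.map s).prod = w}

open Submodule (span)

section LinearIndependent

variable {R V I : Type*} [Ring R] [AddCommGroup V] [Module R V] [Fintype I] {α : I → V}

theorem sum_smul_mem_span_image {c : I → R} {S : Set I} (hc : ∀ i ∉ S, c i = 0) :
    ∑ i, c i • α i ∈ span R (α '' S) :=
  Submodule.sum_mem _ fun i _ => by
    by_cases hi : i ∈ S
    · exact Submodule.smul_mem _ _ (Submodule.subset_span (Set.mem_image_of_mem α hi))
    · simp [hc i hi]

theorem LinearIndependent.sum_smul_mem_span_image_iff (hα : LinearIndependent R α)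
    {c : I → R} {S : Set I} : ∑ i, c i • α i ∈ span R (α '' S) ↔ ∀ i ∉ S, c i = 0 := by
  classical
  refine ⟨fun h => ?_, sum_smul_mem_span_image⟩
  set d : I → R := fun i => if i ∈ S then 0 else c i
  have hdS : ∑ i, d i • α i ∈ span R (α '' S) := by
    have hcd : ∑ i, d i • α i = ∑ i, c i • α i - ∑ i, (c i - d i) • α i := by
      simp [sub_smul]
    rw [hcd]
    exact sub_mem h (sum_smul_mem_span_image fun i hi => by simp [d, hi])
  have hdSc : ∑ i, d i • α i ∈ span R (α '' Sᶜ) :=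
    sum_smul_mem_span_image fun i hi => by simp [d, Set.notMem_compl_iff.mp hi]
  have hd : ∑ i, d i • α i = 0 :=
    Submodule.disjoint_def.mp (hα.disjoint_span_image disjoint_compl_right) _ hdS hdSc
  intro i hi
  simpa [d, hi] using Fintype.linearIndependent_iff.mp hα d hd i

end LinearIndependent

section Cone

variable {V I : Type*} [AddCommGroup V] [Module ℝ V] [Fintype I] {α : I → V}

theorem mem_hull_range_iff {x : V} :
    x ∈ PointedCone.hull ℝ (Set.range α) ↔ ∃ c : I → ℝ, (∀ i, 0 ≤ c i) ∧ ∑ i, c i • α i = x := by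
  constructor
  · intro hx
    obtain ⟨c, rfl⟩ := (Submodule.mem_span_range_iff_exists_fun _).mp hx
    exact ⟨fun i => c i, fun i => (c i).2, rfl⟩
  · rintro ⟨c, hc, rfl⟩
    exact Submodule.sum_mem _ fun i _ =>
      PointedCone.smul_mem _ (hc i) (PointedCone.subset_hull ⟨i, rfl⟩)

theorem LinearIndependent.mem_span_image_of_add_mem (hα : LinearIndependent ℝ α) {S : Set I}
    {x y : V} (hx : x ∈ PointedCone.hull ℝ (Set.range α))
    (hy : y ∈ PointedCone.hull ℝ (Set.range α)) (hxy : x + y ∈ span ℝ (α '' S)) :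
    x ∈ span ℝ (α '' S) := by
  obtain ⟨c, hc, rfl⟩ := mem_hull_range_iff.mp hx
  obtain ⟨d, hd, rfl⟩ := mem_hull_range_iff.mp hy
  rw [← Finset.sum_add_distrib] at hxy
  simp_rw [← add_smul] at hxy
  refine sum_smul_mem_span_image fun i hi => ?_
  have := hα.sum_smul_mem_span_image_iff.mp hxy i hi
  linarith [hc i, hd i]

theorem LinearIndependent.eq_zero_of_mem_hull_of_neg_mem (hα : LinearIndependent ℝ α) {x : V}
    (hx : x ∈ PointedCone.hull ℝ (Set.range α)) (hnx : -x ∈ PointedCone.hull ℝ (Set.range α)) :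
    x = 0 := by
  have h := hα.mem_span_image_of_add_mem (S := ∅) hx hnx (by simp)
  simpa using h

end Cone

structure IsPositiveSystem {V I : Type*} [AddCommGroup V] [Module ℝ V]
    (Φ P : Set V) (α : I → V) : Prop where
  subset : P ⊆ Φ
  mem_or_neg_mem : ∀ β ∈ Φ, β ∈ P ∨ -β ∈ P
  subset_hull : P ⊆ PointedCone.hull ℝ (Set.range α)
  linearIndependent : LinearIndependent ℝ α

namespace IsPositiveSystem

variable {V I : Type*} [AddCommGroup V] [Module ℝ V] {Φ P : Set V} {α : I → V}

theorem neg_mem_of_notMem (hP : IsPositiveSystem Φ P α) {γ : V} (hγ : γ ∈ Φ) (hγP : γ ∉ P) :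
    -γ ∈ P :=
  (hP.mem_or_neg_mem γ hγ).resolve_left hγP

theorem subset_union_of_subset_union (hP : IsPositiveSystem Φ P α)
    {U W : Submodule ℝ V} (h : P ⊆ U ∪ W) : Φ ⊆ U ∪ W := by
  intro β hβ
  rcases hP.mem_or_neg_mem β hβ with hβP | hβP
  · exact h hβP
  · simpa only [Set.mem_union, SetLike.mem_coe, neg_mem_iff] using h hβP

variable [Fintype I]

theorem mem_span_of_sub_mem_span (hP : IsPositiveSystem Φ P α) {S : Set I} {β γ : V}
    (hβ : β ∈ P) (hγ : γ ∈ Φ) (hγP : γ ∉ P) (hγβ : γ - β ∈ span ℝ (α '' S)) :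
    β ∈ span ℝ (α '' S) := by
  refine hP.linearIndependent.mem_span_image_of_add_mem (hP.subset_hull hβ)
    (hP.subset_hull (hP.neg_mem_of_notMem hγ hγP)) ?_
  simpa [sub_eq_add_neg] using neg_mem hγβ

theorem simple_root_mem (hP : IsPositiveSystem Φ P α) {i : I} (hi : α i ∈ Φ) : α i ∈ P := by
  by_contra hiP
  exact hP.linearIndependent.ne_zero i <| hP.linearIndependent.eq_zero_of_mem_hull_of_neg_mem
    (PointedCone.subset_hull ⟨i, rfl⟩) (hP.subset_hull (hP.neg_mem_of_notMem hi hiP))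

theorem map_notMem_of_forall_simple_root (hP : IsPositiveSystem Φ P α) (h0 : (0 : V) ∉ Φ)
    {w : V ≃ₗ[ℝ] V} (hw : ∀ v ∈ Φ, w v ∈ Φ) (hα : ∀ i, α i ∈ Φ) (hwα : ∀ i, w (α i) ∉ P)
    {β : V} (hβ : β ∈ P) : w β ∉ P := by
  intro hwβ
  have hneg : ∀ x ∈ PointedCone.hull ℝ (Set.range α), -w x ∈ PointedCone.hull ℝ (Set.range α) := by
    intro x hx
    induction hx using Submodule.span_induction with
    | mem x hx =>
      obtain ⟨i, rfl⟩ := hx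
      exact hP.subset_hull (hP.neg_mem_of_notMem (hw _ (hα i)) (hwα i))
    | zero => simp
    | add x y _ _ hx hy =>
      rw [map_add, neg_add]
      exact add_mem hx hy
    | smul c x _ hx =>
      rw [LinearMapClass.map_smul_of_tower, ← smul_neg]
      exact Submodule.smul_mem _ c hx
  have hzero : w β = 0 := hP.linearIndependent.eq_zero_of_mem_hull_of_neg_mem
    (hP.subset_hull hwβ) (hneg β (hP.subset_hull hβ))
  rw [w.map_eq_zero_iff] at hzero
  exact h0 (hzero ▸ hP.subset hβ)

end IsPositiveSystem

theorem Subgroup.exists_list_of_mem_closure_image_of_inv_eq {G I : Type*} [Group G] {f : I → G}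
    (hf : ∀ i, (f i)⁻¹ = f i) {S : Set I} {g : G} (hg : g ∈ Subgroup.closure (f '' S)) :
    ∃ l : List I, (∀ i ∈ l, i ∈ S) ∧ (l.map f).prod = g := by
  induction hg using Subgroup.closure_induction'' with
  | mem _ hx =>
    obtain ⟨i, hi, rfl⟩ := hx
    exact ⟨[i], by simpa using hi, by simp⟩
  | inv_mem _ hx =>
    obtain ⟨i, hi, rfl⟩ := hx
    exact ⟨[i], by simpa using hi, by simp [hf]⟩
  | one => exact ⟨[], by simp, rfl⟩
  | mul _ _ _ _ hx hy =>
    obtain ⟨l, hlS, rfl⟩ := hx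
    obtain ⟨m, hmS, rfl⟩ := hy
    exact ⟨l ++ m, fun i hi => (List.mem_append.mp hi).elim (hlS i) (hmS i), by simp⟩

section Reflections

variable {V I : Type*} [NormedAddCommGroup V] [InnerProductSpace ℝ V]

structure IsReflectionFamily (α : I → V) (s : I → V ≃ₗ[ℝ] V) : Prop where
  ne_zero : ∀ i, α i ≠ 0
  apply_eq : ∀ i v, s i v = v - (2 * ⟪v, α i⟫ / ⟪α i, α i⟫) • α i

namespace IsReflectionFamily

variable {α : I → V} {s : I → V ≃ₗ[ℝ] V}

theorem inner_self_ne_zero (hs : IsReflectionFamily α s) (i : I) : ⟪α i, α i⟫ ≠ 0 :=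
  _root_.inner_self_ne_zero.mpr (hs.ne_zero i)

theorem apply_self (hs : IsReflectionFamily α s) (i : I) : s i (α i) = -α i := by
  rw [hs.apply_eq, mul_div_assoc, div_self (hs.inner_self_ne_zero i)]
  module

theorem mul_self (hs : IsReflectionFamily α s) (i : I) : s i * s i = 1 := by
  ext v
  change s i (s i v) = v
  rw [hs.apply_eq i v, map_sub, map_smul, hs.apply_self, hs.apply_eq i v]
  module

theorem inv_eq (hs : IsReflectionFamily α s) (i : I) : (s i)⁻¹ = s i :=
  inv_eq_of_mul_eq_one_right (hs.mul_self i)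

theorem inner_apply_apply (hs : IsReflectionFamily α s) (i : I) (v w : V) :
    ⟪s i v, s i w⟫ = ⟪v, w⟫ := by
  rw [hs.apply_eq i v, hs.apply_eq i w]
  simp only [inner_sub_left, inner_sub_right, real_inner_smul_left, real_inner_smul_right]
  rw [real_inner_comm (α i) w, real_inner_comm (α i) v]
  field_simp [hs.inner_self_ne_zero i]
  ring

theorem inner_list_prod_apply (hs : IsReflectionFamily α s) (l : List I) (v w : V) :
    ⟪(l.map s).prod v, (l.map s).prod w⟫ = ⟪v, w⟫ := by
  induction l with
  | nil => rfl
  | cons j l ih =>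
    simp only [List.map_cons, List.prod_cons, LinearEquiv.mul_apply, hs.inner_apply_apply, ih]

theorem apply_sub_mem_span (hs : IsReflectionFamily α s) {S : Set I} {i : I} (hi : i ∈ S)
    (v : V) : s i v - v ∈ span ℝ (α '' S) := by
  rw [hs.apply_eq, sub_sub_cancel_left]
  exact neg_mem (Submodule.smul_mem _ _ (Submodule.subset_span (Set.mem_image_of_mem α hi)))

theorem list_prod_apply_sub_mem_span (hs : IsReflectionFamily α s) {S : Set I} {l : List I}
    (hl : ∀ i ∈ l, i ∈ S) (v : V) : (l.map s).prod v - v ∈ span ℝ (α '' S) := by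
  induction l with
  | nil => simp
  | cons j l ih =>
    simp only [List.forall_mem_cons] at hl
    have h := add_mem (hs.apply_sub_mem_span hl.1 ((l.map s).prod v)) (ih hl.2)
    simpa using h

theorem apply_mem (hs : IsReflectionFamily α s) {Φ : Set V}
    (hrefl : ∀ β ∈ Φ, ∀ γ ∈ Φ, γ - (2 * ⟪γ, β⟫ / ⟪β, β⟫) • β ∈ Φ) (hα : ∀ i, α i ∈ Φ) (i : I) :
    ∀ v ∈ Φ, s i v ∈ Φ := fun v hv => hs.apply_eq i v ▸ hrefl _ (hα i) v hv

theorem list_prod_mapsTo {Φ : Set V} (hsΦ : ∀ i, ∀ v ∈ Φ, s i v ∈ Φ) (l : List I) :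
    ∀ v ∈ Φ, (l.map s).prod v ∈ Φ := by
  induction l with
  | nil => exact fun v hv => hv
  | cons j l ih => exact fun v hv => hsΦ j _ (ih v hv)

theorem mapsTo_of_mem_closure (hs : IsReflectionFamily α s) {Φ : Set V}
    (hsΦ : ∀ i, ∀ v ∈ Φ, s i v ∈ Φ) {S : Set I} {w : V ≃ₗ[ℝ] V}
    (hw : w ∈ Subgroup.closure (s '' S)) : ∀ v ∈ Φ, w v ∈ Φ := by
  obtain ⟨l, -, rfl⟩ := Subgroup.exists_list_of_mem_closure_image_of_inv_eq hs.inv_eq hw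
  exact list_prod_mapsTo hsΦ l

theorem apply_sub_mem_span_of_mem_closure (hs : IsReflectionFamily α s) {S : Set I}
    {w : V ≃ₗ[ℝ] V} (hw : w ∈ Subgroup.closure (s '' S)) (v : V) :
    w v - v ∈ span ℝ (α '' S) := by
  obtain ⟨l, hl, rfl⟩ := Subgroup.exists_list_of_mem_closure_image_of_inv_eq hs.inv_eq hw
  exact hs.list_prod_apply_sub_mem_span hl v

theorem mul_eq_mul_of_apply_eq_smul (hs : IsReflectionFamily α s) {u : V ≃ₗ[ℝ] V}
    (hu : ∀ v w, ⟪u v, u w⟫ = ⟪v, w⟫) {i j : I} {c : ℝ} (hc : c ≠ 0) (hui : u (α i) = c • α j) :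
    u * s i = s j * u := by
  ext v
  change u (s i v) = s j (u v)
  rw [hs.apply_eq i v, hs.apply_eq j (u v), map_sub, map_smul, hui, smul_smul]
  have h1 : ⟪v, α i⟫ = c * ⟪u v, α j⟫ := by
    rw [← hu v (α i), hui, real_inner_smul_right]
  have h2 : ⟪α i, α i⟫ = c * (c * ⟪α j, α j⟫) := by
    rw [← hu (α i) (α i), hui, real_inner_smul_left, real_inner_smul_right]
  rw [h1, h2]
  congr 2
  field_simp

end IsReflectionFamily

end Reflections

section Length

variable {V I : Type*} [NormedAddCommGroup V] [InnerProductSpace ℝ V] {α : I → V}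
  {s : I → V ≃ₗ[ℝ] V}

theorem coxLen_le_length (l : List I) : coxLen s (l.map s).prod ≤ l.length :=
  Nat.sInf_le ⟨l, rfl, rfl⟩

theorem exists_length_eq_coxLen (l : List I) :
    ∃ l' : List I, l'.length = coxLen s (l.map s).prod ∧ (l'.map s).prod = (l.map s).prod :=
  Nat.sInf_mem (⟨l.length, l, rfl, rfl⟩ :
    {n : ℕ | ∃ l' : List I, l'.length = n ∧ (l'.map s).prod = (l.map s).prod}.Nonempty)

variable [Fintype I] {Φ P : Set V}

theorem IsPositiveSystem.exists_eq_smul_of_apply_notMem (hP : IsPositiveSystem Φ P α)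
    (hs : IsReflectionFamily α s) (hsΦ : ∀ i, ∀ v ∈ Φ, s i v ∈ Φ) {j : I} {β : V}
    (hβ : β ∈ P) (hjβ : s j β ∉ P) : ∃ c : ℝ, c ≠ 0 ∧ β = c • α j := by
  have h := hP.mem_span_of_sub_mem_span hβ (hsΦ j β (hP.subset hβ)) hjβ
    (hs.apply_sub_mem_span (Set.mem_singleton j) β)
  rw [Set.image_singleton, Submodule.mem_span_singleton] at h
  obtain ⟨c, rfl⟩ := h
  refine ⟨c, fun hc => ?_, rfl⟩
  rw [hc, zero_smul] at hβ hjβ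
  exact hjβ ((map_zero (s j)).symm ▸ hβ)

theorem IsPositiveSystem.exists_shorter_word_of_apply_notMem (hP : IsPositiveSystem Φ P α)
    (hs : IsReflectionFamily α s) (hsΦ : ∀ i, ∀ v ∈ Φ, s i v ∈ Φ) (hαP : ∀ i, α i ∈ P)
    (l : List I) {i : I} (h : (l.map s).prod (α i) ∉ P) :
    ∃ l' : List I, l'.length + 1 = l.length ∧ (l'.map s).prod = (l.map s).prod * s i := by
  induction l with
  | nil => exact absurd (hαP i) h
  | cons j l ih =>
    simp only [List.map_cons, List.prod_cons, LinearEquiv.mul_apply] at h ⊢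
    by_cases hl : (l.map s).prod (α i) ∈ P
    -- `s j` is the letter that makes `α i` negative, so the rest of the word sends `α i` to a
    -- multiple of `α j` and conjugates `s i` into `s j`: the letter `s j` cancels.
    · obtain ⟨c, hc, hlc⟩ := hP.exists_eq_smul_of_apply_notMem hs hsΦ hl h
      refine ⟨l, rfl, ?_⟩
      rw [mul_assoc, hs.mul_eq_mul_of_apply_eq_smul (hs.inner_list_prod_apply l) hc hlc,
        ← mul_assoc, hs.mul_self, one_mul]
    · obtain ⟨l', hlen, hprod⟩ := ih hl
      exact ⟨j :: l', by simp [hlen], by simp [hprod, mul_assoc]⟩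

theorem IsPositiveSystem.coxLen_lt_coxLen_mul (hP : IsPositiveSystem Φ P α)
    (hs : IsReflectionFamily α s) (hsΦ : ∀ i, ∀ v ∈ Φ, s i v ∈ Φ) (hαP : ∀ i, α i ∈ P)
    (hdisj : ∀ β ∈ P, -β ∉ P) (l : List I) {i : I} (h : (l.map s).prod (α i) ∈ P) :
    coxLen s (l.map s).prod < coxLen s ((l.map s).prod * s i) := by
  obtain ⟨m, hm, hmprod⟩ := exists_length_eq_coxLen (s := s) (l ++ [i])
  simp only [List.map_append, List.prod_append, List.map_cons, List.map_nil, List.prod_cons,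
    List.prod_nil, mul_one] at hm hmprod
  have hneg : (m.map s).prod (α i) ∉ P := by
    rw [hmprod, LinearEquiv.mul_apply, hs.apply_self, map_neg]
    exact hdisj _ h
  obtain ⟨m', hm', hm'prod⟩ := hP.exists_shorter_word_of_apply_notMem hs hsΦ hαP m hneg
  rw [hmprod, mul_assoc, hs.mul_self, mul_one] at hm'prod
  have := coxLen_le_length (s := s) m'
  rw [hm'prod] at this
  omega

theorem IsPositiveSystem.apply_simple_root_notMem_of_isLongest (hP : IsPositiveSystem Φ P α)
    (hs : IsReflectionFamily α s) (hsΦ : ∀ i, ∀ v ∈ Φ, s i v ∈ Φ) (hαP : ∀ i, α i ∈ P)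
    (hdisj : ∀ β ∈ P, -β ∉ P) {S : Set I} {w : V ≃ₗ[ℝ] V}
    (hw : w ∈ Subgroup.closure (s '' S))
    (hmax : ∀ u ∈ Subgroup.closure (s '' S), coxLen s u ≤ coxLen s w) {i : I} (hi : i ∈ S) :
    w (α i) ∉ P := by
  intro hwi
  obtain ⟨l, -, rfl⟩ := Subgroup.exists_list_of_mem_closure_image_of_inv_eq hs.inv_eq hw
  have hlt := hP.coxLen_lt_coxLen_mul hs hsΦ hαP hdisj l hwi
  have hle := hmax _ (mul_mem hw (Subgroup.subset_closure (Set.mem_image_of_mem s hi)))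
  omega

end Length

section Splitting

variable {V I : Type*} [NormedAddCommGroup V] [InnerProductSpace ℝ V] [Fintype I]
  {Φ P : Set V} {α : I → V} {s : I → V ≃ₗ[ℝ] V}

theorem IsPositiveSystem.subset_span_union_of_mul_eq (hP : IsPositiveSystem Φ P α)
    (hs : IsReflectionFamily α s) (hsΦ : ∀ i, ∀ v ∈ Φ, s i v ∈ Φ) (h0 : (0 : V) ∉ Φ)
    (hfin : P.Finite) {J K : Set I} (hJK : Disjoint J K) {w u v : V ≃ₗ[ℝ] V}
    (hw : ∀ β ∈ P, w β ∉ P) (hu : u ∈ Subgroup.closure (s '' J))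
    (hv : v ∈ Subgroup.closure (s '' K)) (hwv : w * v = u) :
    P ⊆ span ℝ (α '' K) ∪ span ℝ (α '' J) := by
  have hvinv := inv_mem hv
  have hmaps : ∀ β ∈ P, β ∉ span ℝ (α '' K) → v⁻¹ β ∈ P ∧ v⁻¹ β ∈ span ℝ (α '' J) := by
    intro β hβ hβK
    have hvβ : v⁻¹ β ∈ Φ := hs.mapsTo_of_mem_closure hsΦ hvinv β (hP.subset hβ)
    have hvβP : v⁻¹ β ∈ P := by
      by_contra hn
      exact hβK (hP.mem_span_of_sub_mem_span hβ hvβ hn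
        (hs.apply_sub_mem_span_of_mem_closure hvinv β))
    refine ⟨hvβP, hP.mem_span_of_sub_mem_span hvβP (hs.mapsTo_of_mem_closure hsΦ hu _ hvβ) ?_
      (hs.apply_sub_mem_span_of_mem_closure hu _)⟩
    rw [← LinearEquiv.mul_apply, ← hwv, mul_inv_cancel_right]
    exact hw β hβ
  have hmapsTo : Set.MapsTo ⇑(v⁻¹) (P \ span ℝ (α '' K)) (P \ span ℝ (α '' K)) := by
    intro β ⟨hβ, hβK⟩
    obtain ⟨hvβP, hvβJ⟩ := hmaps β hβ hβK
    refine ⟨hvβP, fun hvβK => h0 ?_⟩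
    have hzero := Submodule.disjoint_def.mp
      (hP.linearIndependent.disjoint_span_image hJK) _ hvβJ hvβK
    exact hzero ▸ hP.subset hvβP
  have hsurj := ((hfin.sdiff.injOn_iff_bijOn_of_mapsTo hmapsTo).mp
    (v⁻¹).injective.injOn).surjOn
  intro β hβ
  by_cases hβK : β ∈ span ℝ (α '' K)
  · exact Or.inl hβK
  · obtain ⟨γ, ⟨hγ, hγK⟩, rfl⟩ := hsurj ⟨hβ, hβK⟩
    exact Or.inr (hmaps γ hγ hγK).2

end Splitting

section Irreducible

variable {V : Type*} [NormedAddCommGroup V] [InnerProductSpace ℝ V] {Φ : Set V}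

theorem inner_eq_zero_of_subset_union (h0 : (0 : V) ∉ Φ)
    (hrefl : ∀ β ∈ Φ, ∀ γ ∈ Φ, γ - (2 * ⟪γ, β⟫ / ⟪β, β⟫) • β ∈ Φ) {U W : Submodule ℝ V}
    (hUW : Disjoint U W) (hΦ : Φ ⊆ U ∪ W) {a b : V} (ha : a ∈ Φ) (haU : a ∈ U) (hb : b ∈ Φ)
    (hbW : b ∈ W) : ⟪a, b⟫ = 0 := by
  by_contra hab
  have ha0 : a ≠ 0 := fun h => h0 (h ▸ ha)
  have hb0 : b ≠ 0 := fun h => h0 (h ▸ hb)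
  set t := 2 * ⟪b, a⟫ / ⟪a, a⟫
  have ht : t ≠ 0 := div_ne_zero (mul_ne_zero two_ne_zero (real_inner_comm a b ▸ hab))
    (inner_self_ne_zero.mpr ha0)
  rcases hΦ (hrefl a ha b hb) with hU | hW
  · have hbU : b ∈ U := by
      have h := add_mem hU (U.smul_mem t haU)
      rwa [sub_add_cancel] at h
    exact hb0 (Submodule.disjoint_def.mp hUW b hbU hbW)
  · have haW : a ∈ W := by
      have h := sub_mem hbW hW
      rwa [sub_sub_cancel, W.smul_mem_iff ht] at h
    exact ha0 (Submodule.disjoint_def.mp hUW a haU haW)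

theorem subset_or_subset_of_subset_union (h0 : (0 : V) ∉ Φ)
    (hrefl : ∀ β ∈ Φ, ∀ γ ∈ Φ, γ - (2 * ⟪γ, β⟫ / ⟪β, β⟫) • β ∈ Φ)
    (hirr : ¬ ∃ A B : Set V, A.Nonempty ∧ B.Nonempty ∧ A ∪ B = Φ ∧
      ∀ a ∈ A, ∀ b ∈ B, ⟪a, b⟫ = 0)
    {U W : Submodule ℝ V} (hUW : Disjoint U W) (hΦ : Φ ⊆ U ∪ W) : Φ ⊆ U ∨ Φ ⊆ W := by
  by_contra h
  obtain ⟨a, ha, haU⟩ := Set.not_subset.mp (not_or.mp h).1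
  obtain ⟨b, hb, hbW⟩ := Set.not_subset.mp (not_or.mp h).2
  refine hirr ⟨Φ ∩ U, Φ ∩ W, ⟨b, hb, (hΦ hb).resolve_right hbW⟩,
    ⟨a, ha, (hΦ ha).resolve_left haU⟩, ?_, ?_⟩
  · rw [← Set.inter_union_distrib_left, Set.inter_eq_left.mpr hΦ]
  · rintro x ⟨hx, hxU⟩ y ⟨hy, hyW⟩
    exact inner_eq_zero_of_subset_union h0 hrefl hUW hΦ hx hxU hy hyW

end Irreducible

theorem stmt_18_general {V : Type*} [NormedAddCommGroup V] [InnerProductSpace ℝ V]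
    {I : Type*} [Fintype I]
    (Φ : Set V) (hfin : Φ.Finite) (h0 : (0 : V) ∉ Φ)
    (α : I → V) (hα : ∀ i, α i ∈ Φ) (hind : LinearIndependent ℝ α)
    (P : Set V) (hPsub : P ⊆ Φ)
    (hpm : ∀ β ∈ Φ, β ∈ P ∨ -β ∈ P) (hdisj : ∀ β ∈ P, -β ∉ P)
    (hpos : ∀ β ∈ P, ∃ c : I → ℝ, (∀ i, 0 ≤ c i) ∧ β = ∑ i, c i • α i)
    (hrefl : ∀ β ∈ Φ, ∀ γ ∈ Φ, γ - (2 * ⟪γ, β⟫ / ⟪β, β⟫) • β ∈ Φ)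
    (hirr : ¬ ∃ A B : Set V, A.Nonempty ∧ B.Nonempty ∧ A ∪ B = Φ ∧
      ∀ a ∈ A, ∀ b ∈ B, ⟪a, b⟫ = 0)
    -- the simple reflections
    (s : I → (V ≃ₗ[ℝ] V))
    (hs : ∀ i v, s i v = v - (2 * ⟪v, α i⟫ / ⟪α i, α i⟫) • α i)
    -- `w0 J` is the longest element of the standard parabolic subgroup `W_J`
    (w0 : Set I → (V ≃ₗ[ℝ] V))
    (hw0 : ∀ J : Set I, w0 J ∈ Subgroup.closure (s '' J) ∧
      ∀ u ∈ Subgroup.closure (s '' J), coxLen s u ≤ coxLen s (w0 J))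
    (K : Set I) (hKI : K ≠ Set.univ)
    (hco : ∃ J : Set I, J ⊆ Kᶜ ∧ w0 Set.univ * w0 K = w0 J) :
    K = ∅ := by
  obtain ⟨J, hJK, hJ⟩ := hco
  have hP : IsPositiveSystem Φ P α := ⟨hPsub, hpm,
    fun β hβ => mem_hull_range_iff.mpr (let ⟨c, hc, hβc⟩ := hpos β hβ; ⟨c, hc, hβc.symm⟩), hind⟩
  have hs' : IsReflectionFamily α s := ⟨fun i h => h0 (h ▸ hα i), hs⟩
  have hsΦ := hs'.apply_mem hrefl hα
  have hαP : ∀ i, α i ∈ P := fun i => hP.simple_root_mem (hα i)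
  have hlongest : ∀ β ∈ P, w0 Set.univ β ∉ P := fun β =>
    hP.map_notMem_of_forall_simple_root h0 (hs'.mapsTo_of_mem_closure hsΦ (hw0 _).1) hα
      (fun i => hP.apply_simple_root_notMem_of_isLongest hs' hsΦ hαP hdisj (hw0 _).1 (hw0 _).2
        (Set.mem_univ i))
  have hsplit : P ⊆ span ℝ (α '' K) ∪ span ℝ (α '' J) :=
    hP.subset_span_union_of_mul_eq hs' hsΦ h0 (hfin.subset hPsub)
      (Set.subset_compl_iff_disjoint_right.mp hJK) hlongest (hw0 J).1 (hw0 K).1 hJ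
  rcases subset_or_subset_of_subset_union h0 hrefl hirr
      (hind.disjoint_span_image (Set.subset_compl_iff_disjoint_left.mp hJK))
      (hP.subset_union_of_subset_union hsplit) with hΦK | hΦJ
  · obtain ⟨j, hj⟩ := (Set.ne_univ_iff_exists_notMem K).mp hKI
    exact absurd (hΦK (hα j)) (hind.notMem_span_image hj)
  · exact Set.eq_empty_of_forall_notMem fun k hk =>
      hind.notMem_span_image (fun hkJ => hJK hkJ hk) (hΦJ (hα k))

/-- Let `Φ` be a finite irreducible crystallographic root system with base `α : I → V`,
simple reflections `s_i`, Weyl group generated by them, and for `J ⊆ I` let `w₀(J)` be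
the longest element of the standard parabolic subgroup `W_J`.  If `K ⊆ I` with
`K ≠ I` and the lowest coset representative `w₀(I)·w₀(K)` of `w₀ W_K` equals `w₀(J)`
for some `J ⊆ K^c`, then `K = ∅`. -/
theorem stmt_18 {V : Type*} [NormedAddCommGroup V] [InnerProductSpace ℝ V]
    {I : Type*} [Fintype I]
    (Φ : Set V) (hfin : Φ.Finite) (h0 : (0 : V) ∉ Φ)
    (α : I → V) (hα : ∀ i, α i ∈ Φ) (hind : LinearIndependent ℝ α)
    (P : Set V) (hPsub : P ⊆ Φ)
    (hpm : ∀ β ∈ Φ, β ∈ P ∨ -β ∈ P) (hdisj : ∀ β ∈ P, -β ∉ P)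
    (hpos : ∀ β ∈ P, ∃ c : I → ℝ, (∀ i, 0 ≤ c i) ∧ β = ∑ i, c i • α i)
    (hrefl : ∀ β ∈ Φ, ∀ γ ∈ Φ, γ - (2 * ⟪γ, β⟫ / ⟪β, β⟫) • β ∈ Φ)
    (hcrys : ∀ β ∈ Φ, ∀ γ ∈ Φ, ∃ n : ℤ, 2 * ⟪β, γ⟫ / ⟪γ, γ⟫ = (n : ℝ))
    (hirr : ¬ ∃ A B : Set V, A.Nonempty ∧ B.Nonempty ∧ A ∪ B = Φ ∧
      ∀ a ∈ A, ∀ b ∈ B, ⟪a, b⟫ = 0)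
    -- the simple reflections
    (s : I → (V ≃ₗ[ℝ] V))
    (hs : ∀ i v, s i v = v - (2 * ⟪v, α i⟫ / ⟪α i, α i⟫) • α i)
    -- `w0 J` is the longest element of the standard parabolic subgroup `W_J`
    (w0 : Set I → (V ≃ₗ[ℝ] V))
    (hw0 : ∀ J : Set I, w0 J ∈ Subgroup.closure (s '' J) ∧
      ∀ u ∈ Subgroup.closure (s '' J), coxLen s u ≤ coxLen s (w0 J))
    (K : Set I) (hKI : K ≠ Set.univ)
    (hco : ∃ J : Set I, J ⊆ Kᶜ ∧ w0 Set.univ * w0 K = w0 J) :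
    K = ∅ :=
  stmt_18_general Φ hfin h0 α hα hind P hPsub hpm hdisj hpos hrefl hirr s hs w0 hw0 K hKI hco
end
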